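/- Let G be a graph of order n with no 4-cycle and spectral radius μ. Then μ² − μ ≤ n − 1. -/

import Mathlib

/-! Let `x` be an eigenvector for `μ` and `y = |x|`. As the adjacency matrix `A` is nonnegative,
`μ y ≤ A y` entrywise, and as `μ` is the largest eigenvalue, the Rayleigh bound `y ⬝ A y ≤ μ y ⬝ y`
forces `A y = μ y` on the support of `y`. At a vertex `u` where `y` is maximal this gives
`μ² y_u ≤ (A² y)_u`. On the other hand `(A² - A)_{uw}` is `deg u` for `w = u`, at most `0` for
neighbours `w` of `u`, and at most `1` otherwise, since in a `C₄`-free graph two distinct vertices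
have at most one common neighbour; hence `(A² y)_u - (A y)_u ≤ (n - 1) y_u`. -/

open Matrix Finset

def IsSpecRad {n : ℕ} (A : Matrix (Fin n) (Fin n) ℝ) (μ : ℝ) : Prop :=
  Module.End.HasEigenvalue A.mulVecLin μ ∧
    ∀ ν : ℝ, Module.End.HasEigenvalue A.mulVecLin ν → ν ≤ μ

def Has4Cycle {V : Type*} (G : SimpleGraph V) : Prop :=
  ∃ a b c d : V, G.Adj a b ∧ G.Adj b c ∧ G.Adj c d ∧ G.Adj d a ∧ a ≠ c ∧ b ≠ d

namespace Matrix

variable {ι : Type*} [Fintype ι] {A : Matrix ι ι ℝ} {μ : ℝ}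

theorem IsHermitian.dotProduct_mulVec_le [DecidableEq ι] (hA : A.IsHermitian)
    (hμ : ∀ ν, Module.End.HasEigenvalue A.mulVecLin ν → ν ≤ μ) (z : ι → ℝ) :
    z ⬝ᵥ (A *ᵥ z) ≤ μ * (z ⬝ᵥ z) := by
  have hpos : (algebraMap ℝ (Matrix ι ι ℝ) μ - A).PosSemidef := by
    have hμ1 : (algebraMap ℝ (Matrix ι ι ℝ) μ).IsHermitian := by
      rw [algebraMap_eq_diagonal]; exact isHermitian_diagonal _
    refine posSemidef_iff_isHermitian_and_spectrum_nonneg.2 ⟨hμ1.sub hA, ?_⟩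
    rw [← spectrum.singleton_sub_eq]
    rintro _ ⟨_, rfl, ν, hν, rfl⟩
    rw [← spectrum_toLin', ← Module.End.hasEigenvalue_iff_mem_spectrum] at hν
    simpa using hμ ν hν
  simpa [sub_mulVec, dotProduct_sub, Algebra.algebraMap_eq_smul_one, smul_mulVec] using
    hpos.dotProduct_mulVec_nonneg z

theorem abs_mulVec_apply_le (hA : ∀ i j, 0 ≤ A i j) (x : ι → ℝ) (i : ι) :
    |(A *ᵥ x) i| ≤ (A *ᵥ |x|) i := by
  simp only [mulVec, dotProduct, Pi.abs_apply]
  refine (abs_sum_le_sum_abs _ _).trans_eq (sum_congr rfl fun j _ => ?_)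
  rw [abs_mul, abs_of_nonneg (hA i j)]

theorem mulVec_mono_of_nonneg (hA : ∀ i j, 0 ≤ A i j) {x y : ι → ℝ} (hxy : x ≤ y) :
    A *ᵥ x ≤ A *ᵥ y := fun i =>
  sum_le_sum fun j _ => mul_le_mul_of_nonneg_left (hxy j) (hA i j)

theorem smul_abs_le_mulVec_abs (hA : ∀ i j, 0 ≤ A i j) {x : ι → ℝ} (hx : A *ᵥ x = μ • x) :
    μ • |x| ≤ A *ᵥ |x| := fun i =>
  calc μ * |x i| ≤ |μ * x i| := by rw [abs_mul]; gcongr; exact le_abs_self μ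
    _ = |(A *ᵥ x) i| := by rw [hx, Pi.smul_apply, smul_eq_mul]
    _ ≤ (A *ᵥ |x|) i := abs_mulVec_apply_le hA x i

theorem IsHermitian.mulVec_abs_apply_eq [DecidableEq ι] (hA : A.IsHermitian)
    (hA0 : ∀ i j, 0 ≤ A i j) (hμ : ∀ ν, Module.End.HasEigenvalue A.mulVecLin ν → ν ≤ μ) {x : ι → ℝ}
    (hx : A *ᵥ x = μ • x) {i : ι} (hi : x i ≠ 0) :
    (A *ᵥ |x|) i = μ * |x i| := by
  set y := |x|
  change (A *ᵥ y) i = μ * y i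
  have hdefect : ∀ j ∈ univ, 0 ≤ y j * ((A *ᵥ y) j - μ * y j) := fun j _ =>
    mul_nonneg (abs_nonneg _) (sub_nonneg.2 (smul_abs_le_mulVec_abs hA0 hx j))
  have hsum : ∑ j, y j * ((A *ᵥ y) j - μ * y j) = 0 := by
    refine le_antisymm ?_ (sum_nonneg hdefect)
    have := hA.dotProduct_mulVec_le hμ y
    simp only [dotProduct, mul_sum] at this
    simpa [mul_sub, sum_sub_distrib, mul_left_comm] using this
  have := (sum_eq_zero_iff_of_nonneg hdefect).1 hsum i (mem_univ i)
  have hyi : y i ≠ 0 := abs_ne_zero.2 hi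
  simpa [hyi, sub_eq_zero] using this

end Matrix

namespace SimpleGraph

variable {V : Type*} [Fintype V] [DecidableEq V] {G : SimpleGraph V} [DecidableRel G.Adj]

theorem adjMatrix_mul_self_apply (R : Type*) [NonAssocSemiring R] (u w : V) :
    (G.adjMatrix R * G.adjMatrix R) u w = #(G.neighborFinset u ∩ G.neighborFinset w) := by
  simp only [adjMatrix_mul_apply, adjMatrix_apply, sum_boole]
  congr 2
  ext v
  simp [adj_comm]

theorem card_neighborFinset_inter_le_one (hC4 : ¬ Has4Cycle G) {u w : V} (huw : u ≠ w) :
    #(G.neighborFinset u ∩ G.neighborFinset w) ≤ 1 := by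
  refine card_le_one.2 fun b hb d hd => by_contra fun hbd => hC4 ?_
  simp only [mem_inter, mem_neighborFinset] at hb hd
  exact ⟨u, b, w, d, hb.1, hb.2.symm, hd.2, hd.1.symm, huw, hbd⟩

theorem adjMatrix_mul_self_apply_le_one {R : Type*} [Semiring R] [PartialOrder R]
    [IsOrderedRing R] (hC4 : ¬ Has4Cycle G) {u w : V} (huw : u ≠ w) :
    (G.adjMatrix R * G.adjMatrix R) u w ≤ 1 := by
  rw [adjMatrix_mul_self_apply]
  exact (Nat.mono_cast (card_neighborFinset_inter_le_one hC4 huw)).trans_eq Nat.cast_one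

theorem adjMatrix_sq_mulVec_sub_mulVec_apply_le (hC4 : ¬ Has4Cycle G) {y : V → ℝ} (hy : 0 ≤ y)
    {u : V} (hu : ∀ w, y w ≤ y u) :
    ((G.adjMatrix ℝ * G.adjMatrix ℝ) *ᵥ y) u - (G.adjMatrix ℝ *ᵥ y) u
      ≤ (Fintype.card V - 1) * y u := by
  set A := G.adjMatrix ℝ
  -- the weights are `deg u` at `u`, `0` at the neighbours of `u` and `1` elsewhere
  have hterm : ∀ w, ((A * A) u w - A u w) * y w
      ≤ (1 - A u w + if w = u then (G.degree u - 1 : ℝ) else 0) * y u := by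
    intro w
    by_cases hwu : w = u
    · subst hwu
      simp [A, adjMatrix_mul_self_apply_self (α := ℝ)]
    have hcodeg := adjMatrix_mul_self_apply_le_one (R := ℝ) hC4 (Ne.symm hwu)
    by_cases hadj : G.Adj u w
    · simp only [A, adjMatrix_apply, hadj, if_true, hwu, if_false, sub_self, add_zero, zero_mul]
      exact mul_nonpos_of_nonpos_of_nonneg (sub_nonpos.2 hcodeg) (hy w)
    · simp only [A, adjMatrix_apply, hadj, if_false, hwu, sub_zero, add_zero, one_mul]
      exact (mul_le_mul hcodeg (hu w) (hy w) zero_le_one).trans_eq (one_mul _)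
  calc ((A * A) *ᵥ y) u - (A *ᵥ y) u = ∑ w, ((A * A) u w - A u w) * y w := by
        simp only [mulVec, dotProduct, sub_mul, sum_sub_distrib]
    _ ≤ ∑ w, (1 - A u w + if w = u then (G.degree u - 1 : ℝ) else 0) * y u :=
        sum_le_sum fun w _ => hterm w
    _ = (Fintype.card V - 1) * y u := by
        rw [← sum_mul, sum_add_distrib, sum_sub_distrib]
        simp [A, ← neighborFinset_eq_filter]

end SimpleGraph

theorem C4free_spectral (n : ℕ) (G : SimpleGraph (Fin n)) [DecidableRel G.Adj] (μ : ℝ)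
    (hC4 : ¬ Has4Cycle G)
    (hμ : IsSpecRad (G.adjMatrix ℝ) μ) :
    μ ^ 2 - μ ≤ (n : ℝ) - 1 := by
  set A := G.adjMatrix ℝ
  have hA : A.IsHermitian := G.isHermitian_adjMatrix ℝ
  have hA0 : ∀ i j, 0 ≤ A i j := fun i j => by
    simp only [A, SimpleGraph.adjMatrix_apply]; split_ifs <;> norm_num
  obtain ⟨hμeig, hμmax⟩ := hμ
  obtain ⟨x, hx⟩ := hμeig.exists_hasEigenvector
  have hxμ : A *ᵥ x = μ • x := hx.apply_eq_smul
  obtain ⟨i, hi⟩ : ∃ i, x i ≠ 0 := Function.ne_iff.1 hx.2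
  have : Nonempty (Fin n) := ⟨i⟩
  obtain ⟨u, hu⟩ := Finite.exists_max fun v => |x v|
  have hxu : 0 < |x u| := (abs_pos.2 hi).trans_le (hu i)
  have hAxu : (A *ᵥ |x|) u = μ * |x u| :=
    hA.mulVec_abs_apply_eq hA0 hμmax hxμ (abs_pos.1 hxu)
  have hsq : μ ^ 2 * |x u| ≤ ((A * A) *ᵥ |x|) u :=
    calc μ ^ 2 * |x u| = (A *ᵥ (μ • |x|)) u := by rw [mulVec_smul, Pi.smul_apply, hAxu]; ring
      _ ≤ (A *ᵥ (A *ᵥ |x|)) u := mulVec_mono_of_nonneg hA0 (smul_abs_le_mulVec_abs hA0 hxμ) u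
      _ = ((A * A) *ᵥ |x|) u := by rw [mulVec_mulVec]
  have hcount : ((A * A) *ᵥ |x|) u - (A *ᵥ |x|) u ≤ (n - 1) * |x u| := by
    simpa only [Fintype.card_fin, Pi.abs_apply] using
      G.adjMatrix_sq_mulVec_sub_mulVec_apply_le hC4 (abs_nonneg x) hu
  refine le_of_mul_le_mul_right ?_ hxu
  linarith
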